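/- Fix k ≥ 0 and b ≥ 1. Let 𝔤 ∈ End(𝔹H) be homogeneous of bidegree (s̃, s) and assume that the iterated supercommutator [[···[𝔤, 𝔞_{n_1}(α_1)], ···], 𝔞_{n_{k+1}}(α_{k+1})] = 0 for all n_1,...,n_{k+1} < 0 and all α_1,...,α_{k+1} ∈ H*(X). Let A = 𝔞_{m_1}(β_1)···𝔞_{m_b}(β_b)|0⟩ with m_1,...,m_b < 0 and β_1,...,β_b ∈ H*(X) homogeneous. Then 𝔤(A) = Σ_{i=0}^{k} Σ_{σ_i} (-1)^{s·Σ_{ℓ∈σ_i^0}|β_ℓ| + Σ_{j=1}^{i} Σ_{ℓ∈σ_i^0, ℓ>σ_i(j)} |β_{σ_i(j)}||β_ℓ|} · (Π_{ℓ∈σ_i^0} 𝔞_{m_ℓ}(β_ℓ)) · [[···[𝔤, 𝔞_{m_{σ_i(1)}}(β_{σ_i(1)})], ···], 𝔞_{m_{σ_i(i)}}(β_{σ_i(i)})] |0⟩, where for each i, σ_i runs over all strictly increasing maps {1,...,i} → {1,...,b}, and σ_i^0 = { ℓ : 1 ≤ ℓ ≤ b, ℓ ∉ image(σ_i) }. 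-/

import Mathlib

open scoped TensorProduct BigOperators

noncomputable section

/-- An abstract setup encoding the rational cohomology of a smooth complex projective
surface `X`, the cohomology rings of the Hilbert schemes `X^[n]` of points on `X`,
the Fock space `𝔹H = ⊕ₙ H^*(X^[n])`, the Nakajima–Grojnowski Heisenberg operators
`𝔞_m(α)`, the diagonal pushforwards `τ_{k*}`, the Chern character classes `G_i(α,n)`,
the classes `B_i(α,n)`, and Lehn's operator `𝔡`, together with the background facts
about these objects used in Li–Qin–Wang, "Stability of the cohomology rings of
Hilbert schemes of points on surfaces". -/
structure HilbertSetup where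
  /-- the rational cohomology `H^*(X;ℚ)` of the surface -/
  A : Type
  [ringA : Ring A]
  [algA : Algebra ℚ A]
  /-- `gr i` is `H^i(X;ℚ)` -/
  gr : ℕ → Submodule ℚ A
  one_gr : (1 : A) ∈ gr 0
  /-- super-commutativity of `H^*(X;ℚ)` -/
  A_comm : ∀ (p q : ℕ) (x y : A), x ∈ gr p → y ∈ gr q →
    x * y = ((-1 : ℚ) ^ (p * q)) • (y * x)
  /-- the canonical class `K_X ∈ H^2(X)` -/
  K : A
  K_gr : K ∈ gr 2
  /-- the Euler class `e_X ∈ H^4(X)` -/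
  e : A
  e_gr : e ∈ gr 4
  /-- `∫_X : H^*(X) → ℚ` -/
  integral : A →ₗ[ℚ] ℚ
  /-- `Hn n` is the rational cohomology ring `H^*(X^[n];ℚ)` of the Hilbert scheme -/
  Hn : ℕ → Type
  [ringH : ∀ n, Ring (Hn n)]
  [algH : ∀ n, Algebra ℚ (Hn n)]
  /-- `hgr n i` is `H^i(X^[n];ℚ)` -/
  hgr : (n : ℕ) → ℕ → Submodule ℚ (Hn n)
  /-- `∫_{X^[n]} : H^*(X^[n]) → ℚ` -/
  integralH : (n : ℕ) → Hn n →ₗ[ℚ] ℚ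
  /-- the Fock space `𝔹H = ⊕ₙ H^*(X^[n])` -/
  BH : Type
  [acgBH : AddCommGroup BH]
  [modBH : Module ℚ BH]
  /-- the inclusion of `H^*(X^[n])` as the `n`-th component of `𝔹H` -/
  incl : (n : ℕ) → Hn n →ₗ[ℚ] BH
  /-- the Heisenberg operators `𝔞_m(α)` -/
  a : ℤ → A →ₗ[ℚ] Module.End ℚ BH
  /-- the Heisenberg commutation relation (Nakajima):
  `[𝔞_m(α), 𝔞_l(β)] = -m·δ_{m+l,0}·(∫_X αβ)·Id` -/
  heis : ∀ (m l : ℤ) (p q : ℕ) (α β : A), α ∈ gr p → β ∈ gr q →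
    a m α * a l β - ((-1 : ℚ) ^ (p * q)) • (a l β * a m α) =
      if m + l = 0 then ((-m : ℚ) * integral (α * β)) • (1 : Module.End ℚ BH) else 0
  /-- the diagonal pushforward `τ_{k*} : H^*(X) → H^*(X^k) = H^*(X)^{⊗k}` (Künneth) -/
  tau : (k : ℕ) → A →ₗ[ℚ] TensorPower ℚ k A
  /-- `aa [n₁,…,n_k] α` is the operator `𝔞_{n₁}⋯𝔞_{n_k}(τ_{k*}α)` -/
  aa : List ℤ → A →ₗ[ℚ] Module.End ℚ BH
  aa_single : ∀ (n : ℤ) (α : A), aa [n] α = a n α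
  /-- the convention `τ_{0*}(α) = ∫_X α` -/
  aa_nil : ∀ α : A, aa [] α = integral α • (1 : Module.End ℚ BH)
  /-- `𝔞_{n₁}⋯𝔞_{n_k}(τ_{k*}α)` is computed from any Künneth decomposition
  `τ_{k*}α = Σᵢ α_{i,1} ⊗ ⋯ ⊗ α_{i,k}` as `Σᵢ 𝔞_{n₁}(α_{i,1})⋯𝔞_{n_k}(α_{i,k})` -/
  aa_kunneth : ∀ (ns : List ℤ) (N : ℕ) (f : Fin N → Fin ns.length → A) (α : A),
    tau ns.length α = ∑ i, PiTensorProduct.tprod ℚ (f i) →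
    aa ns α = ∑ i, (List.ofFn fun j => a (ns.get j) (f i j)).prod
  /-- the Chern character classes `G_i(α,n) ∈ H^{|α|+2i}(X^[n])`, i.e. the
  degree-`(|α|+2i)` component of `p_{1*}(ch(𝒪_{𝒵_n})·p₂^*td(X)·p₂^*α)` -/
  G : (i : ℕ) → (n : ℕ) → A →ₗ[ℚ] Hn n
  G_gr : ∀ (i n p : ℕ) (α : A), α ∈ gr p → G i n α ∈ hgr n (p + 2 * i)
  /-- the Chern character operator `𝔊_i(α)`, acting on `H^*(X^[n])` as cup
  product with `G_i(α,n)` -/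
  Gop : ℕ → A →ₗ[ℚ] Module.End ℚ BH
  Gop_spec : ∀ (i : ℕ) (α : A) (n : ℕ) (x : Hn n),
    Gop i α (incl n x) = incl n (G i n α * x)
  /-- the classes `B_i(α,n) = (1/(n-i-1)!)·𝔞_{-1}(1_X)^{n-i-1}𝔞_{-(i+1)}(α)|0⟩` -/
  Bcl : (i : ℕ) → (n : ℕ) → A →ₗ[ℚ] Hn n
  Bcl_spec : ∀ (i n : ℕ) (α : A), i < n →
    incl n (Bcl i n α) =
      ((Nat.factorial (n - i - 1) : ℚ))⁻¹ •
        ((a (-1) 1 ^ (n - i - 1)) * a (-(i + 1 : ℕ) : ℤ) α) (incl 0 1)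
  Bcl_zero : ∀ (i n : ℕ) (α : A), n ≤ i → Bcl i n α = 0
  /-- the class `c₁(p_{1*}𝒪_{𝒵_n}) ∈ H^2(X^[n])` -/
  dcl : (n : ℕ) → Hn n
  /-- Lehn's operator `𝔡`, acting on `H^*(X^[n])` by cup product with `dcl n` -/
  dOp : Module.End ℚ BH
  dOp_spec : ∀ (n : ℕ) (x : Hn n), dOp (incl n x) = incl n (dcl n * x)
  /-- `contr k γ` is the class on `X` obtained from `τ_{k*}γ` by multiplying
  out all Künneth components -/
  contr : ℕ → A →ₗ[ℚ] A
  contr_spec : ∀ (u N : ℕ) (f : Fin N → Fin u → A) (γ : A),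
    tau u γ = ∑ i, PiTensorProduct.tprod ℚ (f i) →
    contr u γ = ∑ i, (List.ofFn (f i)).prod

attribute [instance] HilbertSetup.ringA HilbertSetup.algA HilbertSetup.ringH
  HilbertSetup.algH HilbertSetup.acgBH HilbertSetup.modBH

namespace HilbertSetup

variable (S : HilbertSetup)

/-- the vacuum vector `|0⟩ ∈ H^0(X^[0]) = ℚ` -/
def vac : S.BH := S.incl 0 1

/-- `𝟏_{-m} = (1/m!)·𝔞_{-1}(1_X)^m` for `m ≥ 0`, and `0` for `m < 0` -/
def oneNeg (m : ℤ) : Module.End ℚ S.BH :=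
  if 0 ≤ m then ((Nat.factorial m.toNat : ℚ))⁻¹ • (S.a (-1) 1) ^ m.toNat else 0

/-- the derivative `𝔣' = [𝔡, 𝔣]` -/
def deriv (f : Module.End ℚ S.BH) : Module.End ℚ S.BH := S.dOp * f - f * S.dOp

/-- the higher derivative `𝔣^{(k)}` -/
def derivN (k : ℕ) (f : Module.End ℚ S.BH) : Module.End ℚ S.BH := (S.deriv)^[k] f

/-- an operator `𝔣 ∈ End(𝔹H)` is homogeneous of bidegree `(ℓ, m)` if
`𝔣(H^i(X^[n])) ⊆ H^{i+m}(X^[n+ℓ])` -/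
def HasBidegree (f : Module.End ℚ S.BH) (ℓ m : ℤ) : Prop :=
  ∀ (n i : ℕ) (x : S.Hn n), x ∈ S.hgr n i →
    f (S.incl n x) ∈
      ⨆ (n' : ℕ) (_ : (n' : ℤ) = (n : ℤ) + ℓ) (i' : ℕ) (_ : (i' : ℤ) = (i : ℤ) + m),
        (S.hgr n' i').map (S.incl n')

end HilbertSetup

/-- the Lie superalgebra bracket `[F, G] = F∘G - (-1)^{pq}·G∘F` of operators of
cohomological degrees `p` and `q` -/
def sComm {M : Type} [AddCommGroup M] [Module ℚ M] (p q : ℤ)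
    (F G : Module.End ℚ M) : Module.End ℚ M :=
  F * G - ((-1 : ℚ) ^ (p * q)) • (G * F)

/-- the iterated superbracket `[⋯[[F, G₁], G₂], ⋯], G_r]`, where `p` is the
cohomological degree of `F` and each `Gᵢ` is listed together with its degree -/
def itSComm {M : Type} [AddCommGroup M] [Module ℚ M] :
    ℤ → Module.End ℚ M → List (ℤ × Module.End ℚ M) → Module.End ℚ M
  | _, F, [] => F
  | p, F, (q, G) :: rest => itSComm (p + q) (sComm p q F G) rest

end

/-!
Writing `𝔤 A₁ = ± A₁ 𝔤 + [𝔤, A₁]` and recursing on `A₂ ⋯ A_b` expands `𝔤 A₁ ⋯ A_b` as a sum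
over subsets `T ⊆ {1, …, b}`: the operators `A_ℓ` with `ℓ ∉ T` are moved to the left of `𝔤`, those
with `j ∈ T` are bracketed into `𝔤` in increasing order, and the sign is the Koszul sign of these
moves (`A_ℓ` crosses `𝔤` and every `A_j` with `j ∈ T`, `j < ℓ`). This is an identity in
`End(𝔹H)` for arbitrary operators. With `A_ℓ = 𝔞_{m_ℓ}(β_ℓ)`, every term with `|T| > k` vanishes,
because its iterated bracket begins with a `(k+1)`-fold bracket of `𝔤` with creation operators.
-/

theorem Finset.powerset_map {α β : Type*} (f : α ↪ β) (s : Finset α) :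
    (s.map f).powerset = s.powerset.map (Finset.mapEmbedding f).toEmbedding := by
  ext t
  simp [Finset.subset_map_iff, and_comm, eq_comm]

namespace Fin

variable {n : ℕ}

lemma zero_notMem_map_succEmb (T : Finset (Fin n)) : (0 : Fin (n + 1)) ∉ T.map (succEmb n) := by
  simp [succ_ne_zero]

lemma compl_map_succEmb (T : Finset (Fin n)) :
    (T.map (succEmb n))ᶜ = insert 0 (Tᶜ.map (succEmb n)) := by
  ext x
  cases x using Fin.cases <;> simp [succ_ne_zero]

lemma compl_insert_zero_map_succEmb (T : Finset (Fin n)) :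
    (insert 0 (T.map (succEmb n)))ᶜ = Tᶜ.map (succEmb n) := by
  ext x
  cases x using Fin.cases <;> simp [succ_ne_zero]

lemma sort_map_succEmb (T : Finset (Fin n)) :
    (T.map (succEmb n)).sort (· ≤ ·) = (T.sort (· ≤ ·)).map succ :=
  (strictMono_succ.strictMonoOn _).map_finsetSort.symm

lemma sort_insert_zero (T : Finset (Fin (n + 1))) (h : 0 ∉ T) :
    (insert 0 T).sort (· ≤ ·) = 0 :: T.sort (· ≤ ·) :=
  Finset.sort_insert _ (fun i _ => zero_le i) h

lemma sum_finset_succ {γ : Type*} [AddCommMonoid γ] (f : Finset (Fin (n + 1)) → γ) :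
    ∑ T, f T = ∑ T : Finset (Fin n), (f (T.map (succEmb n)) + f (insert 0 (T.map (succEmb n)))) := by
  have huniv : (Finset.univ : Finset (Fin (n + 1))) = insert 0 (Finset.univ.map (succEmb n)) := by
    rw [univ_succ, Finset.cons_eq_insert]; rfl
  rw [← Finset.powerset_univ, huniv, Finset.sum_powerset_insert (zero_notMem_map_succEmb _),
    Finset.powerset_map, Finset.sum_map, Finset.sum_map, Finset.powerset_univ,
    ← Finset.sum_add_distrib]
  rfl

end Fin

section SuperCommutator

variable {M : Type} [AddCommGroup M] [Module ℚ M]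

lemma itSComm_zero_left (p : ℤ) (L : List (ℤ × Module.End ℚ M)) : itSComm p 0 L = 0 := by
  induction L generalizing p with
  | nil => rfl
  | cons G L ih => simpa [itSComm, sComm] using ih _

lemma itSComm_append (p : ℤ) (F : Module.End ℚ M) (L₁ L₂ : List (ℤ × Module.End ℚ M)) :
    itSComm p F (L₁ ++ L₂) = itSComm (p + (L₁.map Prod.fst).sum) (itSComm p F L₁) L₂ := by
  induction L₁ generalizing p F with
  | nil => simp [itSComm]
  | cons G L₁ ih => simp [itSComm, ih, add_assoc]

lemma itSComm_eq_zero_of_take {p : ℤ} {F : Module.End ℚ M} {L : List (ℤ × Module.End ℚ M)}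
    (n : ℕ) (h : itSComm p F (L.take n) = 0) : itSComm p F L = 0 := by
  rw [← L.take_append_drop n, itSComm_append, h, itSComm_zero_left]

end SuperCommutator
section Expansion

variable {M : Type} [AddCommGroup M] [Module ℚ M]

def sCommExpansionTerm {b : ℕ} (s : ℤ) (g : Module.End ℚ M) (q : Fin b → ℤ)
    (A : Fin b → Module.End ℚ M) (T : Finset (Fin b)) : Module.End ℚ M :=
  ((-1 : ℚ) ^ (s * (∑ ℓ ∈ Tᶜ, q ℓ) + ∑ j ∈ T, ∑ ℓ ∈ Tᶜ.filter (fun ℓ => j < ℓ), q j * q ℓ)) •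
    (((Tᶜ.sort (· ≤ ·)).map A).prod * itSComm s g ((T.sort (· ≤ ·)).map fun j => (q j, A j)))

section Succ

variable {b : ℕ} (s : ℤ) (g : Module.End ℚ M) (q : Fin (b + 1) → ℤ)
  (A : Fin (b + 1) → Module.End ℚ M) (T : Finset (Fin b))

lemma sCommExpansionTerm_map_succEmb :
    sCommExpansionTerm s g q A (T.map (Fin.succEmb b)) =
      (-1 : ℚ) ^ (s * q 0) • (A 0 * sCommExpansionTerm s g (Fin.tail q) (Fin.tail A) T) := by
  rw [sCommExpansionTerm, sCommExpansionTerm, Fin.compl_map_succEmb,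
    Fin.sort_insert_zero _ (Fin.zero_notMem_map_succEmb _), Fin.sort_map_succEmb,
    Fin.sort_map_succEmb, Finset.sum_insert (Fin.zero_notMem_map_succEmb _)]
  simp only [List.map_cons, List.map_map, List.prod_cons, Function.comp_def,
    Finset.sum_map, Fin.coe_succEmb, Finset.filter_insert, Fin.not_lt_zero, if_false,
    Finset.filter_map, Fin.succ_lt_succ_iff, mul_smul_comm, smul_smul, mul_assoc, Fin.tail]
  rw [← zpow_add₀ (by norm_num)]
  congr 2
  ring

lemma sCommExpansionTerm_insert_zero_map_succEmb :
    sCommExpansionTerm s g q A (insert 0 (T.map (Fin.succEmb b))) =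
      sCommExpansionTerm (s + q 0) (sComm s (q 0) g (A 0)) (Fin.tail q) (Fin.tail A) T := by
  rw [sCommExpansionTerm, sCommExpansionTerm, Fin.compl_insert_zero_map_succEmb,
    Fin.sort_insert_zero _ (Fin.zero_notMem_map_succEmb _), Fin.sort_map_succEmb,
    Fin.sort_map_succEmb, Finset.sum_insert (Fin.zero_notMem_map_succEmb _)]
  simp only [List.map_cons, List.map_map, Function.comp_def, Finset.sum_map, Fin.coe_succEmb,
    Finset.filter_map, Fin.succ_lt_succ_iff, Fin.succ_pos, itSComm, Finset.mul_sum, Fin.tail]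
  congr 2
  simp only [Finset.filter_true, add_mul, Finset.sum_add_distrib]
  ring

end Succ

lemma mul_prod_ofFn_eq_sum_sCommExpansionTerm {b : ℕ} (s : ℤ) (g : Module.End ℚ M)
    (q : Fin b → ℤ) (A : Fin b → Module.End ℚ M) :
    g * (List.ofFn A).prod = ∑ T, sCommExpansionTerm s g q A T := by
  induction b generalizing s g with
  | zero =>
    rw [Fintype.sum_subsingleton _ ∅]
    simp [sCommExpansionTerm, itSComm]
  | succ b ih =>
    have hswap : g * A 0 = (-1 : ℚ) ^ (s * q 0) • (A 0 * g) + sComm s (q 0) g (A 0) := by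
      rw [sComm]; abel
    calc g * (List.ofFn A).prod
        = ((-1 : ℚ) ^ (s * q 0) • (A 0 * g) + sComm s (q 0) g (A 0)) *
            (List.ofFn (Fin.tail A)).prod := by
          rw [List.ofFn_succ, List.prod_cons, ← mul_assoc, hswap]; rfl
      _ = ∑ T, ((-1 : ℚ) ^ (s * q 0) • (A 0 * sCommExpansionTerm s g (Fin.tail q) (Fin.tail A) T) +
            sCommExpansionTerm (s + q 0) (sComm s (q 0) g (A 0)) (Fin.tail q) (Fin.tail A) T) := by
          rw [add_mul, smul_mul_assoc, mul_assoc, ih, ih, Finset.mul_sum, Finset.smul_sum,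
            Finset.sum_add_distrib]
      _ = ∑ T, sCommExpansionTerm s g q A T := by
          simp only [Fin.sum_finset_succ, sCommExpansionTerm_map_succEmb,
            sCommExpansionTerm_insert_zero_map_succEmb]

end Expansion

theorem commute_through_creation_general (S : HilbertSetup) (k b : ℕ)
    (s : ℤ) (g : Module.End ℚ S.BH)
    (hvan : ∀ (ns : Fin (k + 1) → ℤ), (∀ j, ns j < 0) →
      ∀ (qs : Fin (k + 1) → ℕ) (αs : Fin (k + 1) → S.A), (∀ j, αs j ∈ S.gr (qs j)) →
        itSComm s g (List.ofFn fun j => (((qs j : ℤ)), S.a (ns j) (αs j))) = 0)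
    (m : Fin b → ℤ) (hm : ∀ ℓ, m ℓ < 0)
    (β : Fin b → S.A) (qβ : Fin b → ℕ) (hβ : ∀ ℓ, β ℓ ∈ S.gr (qβ ℓ)) :
    g (((List.ofFn fun ℓ => S.a (m ℓ) (β ℓ)).prod) S.vac) =
      ∑ T ∈ Finset.univ.filter (fun T : Finset (Fin b) => T.card ≤ k),
        ((-1 : ℚ) ^ (s * (∑ ℓ ∈ Tᶜ, (qβ ℓ : ℤ)) +
            ∑ jj ∈ T, ∑ ℓ ∈ Tᶜ.filter (fun ℓ => jj < ℓ), ((qβ jj : ℤ) * (qβ ℓ : ℤ)))) •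
          ((((Tᶜ.sort (· ≤ ·)).map (fun ℓ => S.a (m ℓ) (β ℓ))).prod *
            itSComm s g ((T.sort (· ≤ ·)).map
              (fun jj => (((qβ jj : ℤ)), S.a (m jj) (β jj))))) S.vac) := by
  have hlarge (T : Finset (Fin b)) (hT : k < T.card) :
      itSComm s g ((T.sort (· ≤ ·)).map fun j => ((qβ j : ℤ), S.a (m j) (β j))) = 0 := by
    have hlen : k + 1 ≤ (T.sort (· ≤ ·)).length := by rwa [Finset.length_sort]
    refine itSComm_eq_zero_of_take (k + 1) ?_
    rw [← List.map_take, ← Fin.ofFn_take_get _ hlen, List.map_ofFn]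
    exact hvan _ (fun _ => hm _) _ _ (fun _ => hβ _)
  rw [← Module.End.mul_apply, mul_prod_ofFn_eq_sum_sCommExpansionTerm s g (fun ℓ => (qβ ℓ : ℤ)),
    LinearMap.sum_apply, ← Finset.sum_filter_of_ne (p := fun T => T.card ≤ k)]
  · rfl
  · intro T _ hT
    by_contra hTk
    simp [sCommExpansionTerm, hlarge T (by omega)] at hT

/-- Lemma 4.1 of Li–Qin–Wang. Fix `k ≥ 0` and `b ≥ 1`. Let
`𝔤 ∈ End(𝔹H)` be homogeneous of bidegree `(s̃, s)` such that all iterated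
supercommutators of `𝔤` with `k+1` creation operators vanish. Let
`A = 𝔞_{m₁}(β₁)⋯𝔞_{m_b}(β_b)|0⟩` with all `m_ℓ < 0` and `β_ℓ` homogeneous. Then
`𝔤(A)` is the sum, over all subsets `T ⊆ {1,…,b}` with at most `k` elements
(i.e. over all strictly increasing maps `σᵢ : {1,…,i} → {1,…,b}`, `0 ≤ i ≤ k`),
of the signed products
`(-1)^{s·Σ_{ℓ∉T}|β_ℓ| + Σ_{j∈T}Σ_{ℓ∉T, ℓ>j}|β_j||β_ℓ|} ·
 Π_{ℓ∉T}𝔞_{m_ℓ}(β_ℓ) · [⋯[𝔤, 𝔞_{m_{j₁}}(β_{j₁})],⋯], 𝔞_{m_{j_i}}(β_{j_i})]|0⟩`,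
the elements of `T = {j₁ < ⋯ < j_i}` and of its complement being taken in
increasing order. -/
theorem commute_through_creation (S : HilbertSetup) (k b : ℕ) (hb : 1 ≤ b)
    (st s : ℤ) (g : Module.End ℚ S.BH) (hg : S.HasBidegree g st s)
    (hvan : ∀ (ns : Fin (k + 1) → ℤ), (∀ j, ns j < 0) →
      ∀ (qs : Fin (k + 1) → ℕ) (αs : Fin (k + 1) → S.A), (∀ j, αs j ∈ S.gr (qs j)) →
        itSComm s g (List.ofFn fun j => (((qs j : ℤ)), S.a (ns j) (αs j))) = 0)
    (m : Fin b → ℤ) (hm : ∀ ℓ, m ℓ < 0)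
    (β : Fin b → S.A) (qβ : Fin b → ℕ) (hβ : ∀ ℓ, β ℓ ∈ S.gr (qβ ℓ)) :
    g (((List.ofFn fun ℓ => S.a (m ℓ) (β ℓ)).prod) S.vac) =
      ∑ T ∈ Finset.univ.filter (fun T : Finset (Fin b) => T.card ≤ k),
        ((-1 : ℚ) ^ (s * (∑ ℓ ∈ Tᶜ, (qβ ℓ : ℤ)) +
            ∑ jj ∈ T, ∑ ℓ ∈ Tᶜ.filter (fun ℓ => jj < ℓ), ((qβ jj : ℤ) * (qβ ℓ : ℤ)))) •
          ((((Tᶜ.sort (· ≤ ·)).map (fun ℓ => S.a (m ℓ) (β ℓ))).prod *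
            itSComm s g ((T.sort (· ≤ ·)).map
              (fun jj => (((qβ jj : ℤ)), S.a (m jj) (β jj))))) S.vac) :=
  commute_through_creation_general S k b s g hvan m hm β qβ hβ
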